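/- Let ζ be a state on a finite-dimensional system T, let m ≥ 1, and let η be a state on T^{⊗m}. For 0 ≤ j ≤ m write η_{1:j} for the marginal of η on its first j tensor factors (η_{1:0} := 1 ∈ ℂ), and η_i for the marginal on the i-th factor. Define the state ν₂ := (1/m) ∑_{i=1}^{m} ζ^{⊗(i−1)} ⊗ η_{1:m−i+1} ⊗ |i⟩⟨i| on T^{⊗m} ⊗ ℂ^m. Then: (a) the partial trace of ν₂ over the m-th T-factor equals ω := (1/m) ∑_{i=1}^{m} ζ^{⊗(i−1)} ⊗ η_{1:m−i} ⊗ |i⟩⟨i| on T^{⊗(m−1)} ⊗ ℂ^m; (b) the partial trace of ν₂ over the first m−1 T-factors and the classical register ℂ^m equals ν' := (1/m) ∑_{i=1}^{m} η_i; consequently, if Δ(η_i, σ) ≤ ε for all i and some state σ on T, then Δ(ν', σ) ≤ ε. -/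

import Mathlib

open scoped BigOperators
open Matrix
open ComplexOrder

noncomputable section

namespace PaperQI

/-- The trace norm `tr √(MᴴM)` of a complex square matrix (sum of singular values). -/
noncomputable def traceNorm {ι : Type} [Fintype ι] [DecidableEq ι] (M : Matrix ι ι ℂ) : ℝ :=
  ((((Matrix.posSemidef_conjTranspose_mul_self M).1.eigenvectorUnitary : Matrix ι ι ℂ) *
    Matrix.diagonal (((↑) : ℝ → ℂ) ∘ (Real.sqrt ∘ (Matrix.posSemidef_conjTranspose_mul_self M).1.eigenvalues)) *
    (star (Matrix.posSemidef_conjTranspose_mul_self M).1.eigenvectorUnitary : Matrix ι ι ℂ)).trace).re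

/-- The trace distance `Δ(ρ,σ) = ½‖ρ − σ‖₁`. -/
noncomputable def traceDist {ι : Type} [Fintype ι] [DecidableEq ι] (ρ σ : Matrix ι ι ℂ) : ℝ :=
  traceNorm (ρ - σ) / 2

/-- A quantum state: a positive semidefinite matrix of unit trace. -/
def IsState {ι : Type} [Fintype ι] (M : Matrix ι ι ℂ) : Prop :=
  M.PosSemidef ∧ M.trace = 1

/-- Kronecker/tensor product of two matrices, on the product index type. -/
def kron {ι κ : Type} (M : Matrix ι ι ℂ) (N : Matrix κ κ ℂ) :
    Matrix (ι × κ) (ι × κ) ℂ := fun p q => M p.1 q.1 * N p.2 q.2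

/-- The `n`-fold tensor power `ρ^{⊗n}`. -/
def tensorPow {ι : Type} (ρ : Matrix ι ι ℂ) (n : ℕ) :
    Matrix (Fin n → ι) (Fin n → ι) ℂ := fun x y => ∏ i, ρ (x i) (y i)

/-- Partial trace over the second tensor factor. -/
noncomputable def ptraceRight {ι κ : Type} [Fintype κ] (M : Matrix (ι × κ) (ι × κ) ℂ) :
    Matrix ι ι ℂ := fun a b => ∑ c, M (a, c) (b, c)

/-- Partial trace over the first tensor factor. -/
noncomputable def ptraceLeft {ι κ : Type} [Fintype ι] (M : Matrix (ι × κ) (ι × κ) ℂ) :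
    Matrix κ κ ℂ := fun a b => ∑ c, M (c, a) (c, b)

/-- Marginal of a multipartite state on `S^{⊗m}` on the `i`-th tensor factor. -/
noncomputable def marginal {ι : Type} [Fintype ι] [DecidableEq ι] {m : ℕ}
    (η : Matrix (Fin m → ι) (Fin m → ι) ℂ) (i : Fin m) : Matrix ι ι ℂ :=
  fun a b => ∑ x : Fin m → ι, if x i = a then η x (Function.update x i b) else 0

/-- The extension `id_τ ⊗ Φ` of a map on matrices, acting blockwise. -/
def rightExt {ι κ τ : Type} (Φ : Matrix ι ι ℂ → Matrix κ κ ℂ) :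
    Matrix (τ × ι) (τ × ι) ℂ → Matrix (τ × κ) (τ × κ) ℂ :=
  fun M p q => Φ (fun x y => M (p.1, x) (q.1, y)) p.2 q.2

/-- The extension `Φ ⊗ id_τ`. -/
def leftExt {ι κ τ : Type} (Φ : Matrix ι ι ℂ → Matrix κ κ ℂ) :
    Matrix (ι × τ) (ι × τ) ℂ → Matrix (κ × τ) (κ × τ) ℂ :=
  fun M p q => Φ (fun x y => M (x, p.2) (y, q.2)) p.1 q.1

/-- Complete positivity: every finite-dimensional extension `id ⊗ Φ` preserves
positive semidefiniteness. -/
def IsCP {ι κ : Type} [Fintype ι] [Fintype κ] (Φ : Matrix ι ι ℂ → Matrix κ κ ℂ) : Prop :=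
  ∀ (n : ℕ) (M : Matrix (Fin n × ι) (Fin n × ι) ℂ), M.PosSemidef →
    (rightExt Φ M).PosSemidef

/-- Trace preserving. -/
def IsTP {ι κ : Type} [Fintype ι] [Fintype κ] (Φ : Matrix ι ι ℂ → Matrix κ κ ℂ) : Prop :=
  ∀ M, (Φ M).trace = M.trace

/-- Trace nonincreasing on positive semidefinite inputs. -/
def IsTNI {ι κ : Type} [Fintype ι] [Fintype κ] (Φ : Matrix ι ι ℂ → Matrix κ κ ℂ) : Prop :=
  ∀ M : Matrix ι ι ℂ, M.PosSemidef → ((Φ M).trace).re ≤ (M.trace).re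

/-- A quantum channel: linear, completely positive and trace preserving. -/
def IsChannel {ι κ : Type} [Fintype ι] [Fintype κ] (Φ : Matrix ι ι ℂ → Matrix κ κ ℂ) : Prop :=
  IsLinearMap ℂ Φ ∧ IsCP Φ ∧ IsTP Φ


/-- Marginal of a state on `T^{⊗m}` on its first `j` tensor factors. -/
noncomputable def margFirst {T : Type} [Fintype T] [DecidableEq T] {m : ℕ}
    (η : Matrix (Fin m → T) (Fin m → T) ℂ) (j : ℕ) (hj : j ≤ m) :
    Matrix (Fin j → T) (Fin j → T) ℂ :=
  fun a b => ∑ x : Fin m → T,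
    if (fun t : Fin j => x (Fin.castLE hj t)) = a
    then η x (fun s : Fin m => if h : (s : ℕ) < j then b ⟨s, h⟩ else x s) else 0

/-- The catalyst state `ω = (1/m) ∑_{i=1}^{m} ζ^{⊗(i−1)} ⊗ η_{1:m−i} ⊗ |i⟩⟨i|` on
`T^{⊗(m−1)} ⊗ ℂ^m`. -/
noncomputable def catalystState {T : Type} [Fintype T] [DecidableEq T] (m : ℕ)
    (ζ : Matrix T T ℂ) (η : Matrix (Fin m → T) (Fin m → T) ℂ) :
    Matrix ((Fin (m - 1) → T) × Fin m) ((Fin (m - 1) → T) × Fin m) ℂ :=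
  fun p q =>
    if p.2 = q.2 then
      (1 / (m : ℂ)) *
        (∏ t : Fin (m - 1), if (t : ℕ) < (p.2 : ℕ) then ζ (p.1 t) (q.1 t) else 1) *
        margFirst η (m - 1 - (p.2 : ℕ)) (by omega)
          (fun t => p.1 ⟨(p.2 : ℕ) + (t : ℕ), by have := t.isLt; have := p.2.isLt; omega⟩)
          (fun t => q.1 ⟨(p.2 : ℕ) + (t : ℕ), by have := t.isLt; have := p.2.isLt; omega⟩)
    else 0

/-- The state `ν₂ = (1/m) ∑_{i=1}^{m} ζ^{⊗(i−1)} ⊗ η_{1:m−i+1} ⊗ |i⟩⟨i|` on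
`T^{⊗m} ⊗ ℂ^m`. -/
noncomputable def nu2 {T : Type} [Fintype T] [DecidableEq T] {m : ℕ}
    (ζ : Matrix T T ℂ) (η : Matrix (Fin m → T) (Fin m → T) ℂ) :
    Matrix ((Fin m → T) × Fin m) ((Fin m → T) × Fin m) ℂ :=
  fun p q =>
    if p.2 = q.2 then
      (1 / (m : ℂ)) *
        (∏ t : Fin m, if (t : ℕ) < (p.2 : ℕ) then ζ (p.1 t) (q.1 t) else 1) *
        margFirst η (m - (p.2 : ℕ)) (by omega)
          (fun t => p.1 ⟨(p.2 : ℕ) + (t : ℕ), by have := t.isLt; have := p.2.isLt; omega⟩)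
          (fun t => q.1 ⟨(p.2 : ℕ) + (t : ℕ), by have := t.isLt; have := p.2.isLt; omega⟩)
    else 0

/-- Partial trace over the last `T`-tensor factor of a state on `T^{⊗m} ⊗ ℂ^m`. -/
noncomputable def ptraceLastBlock {T : Type} [Fintype T] {m r : ℕ}
    (M : Matrix ((Fin m → T) × Fin r) ((Fin m → T) × Fin r) ℂ) :
    Matrix ((Fin (m - 1) → T) × Fin r) ((Fin (m - 1) → T) × Fin r) ℂ :=
  fun p q => ∑ t : T,
    M ((fun s : Fin m => if h : (s : ℕ) < m - 1 then p.1 ⟨s, h⟩ else t), p.2)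
      ((fun s : Fin m => if h : (s : ℕ) < m - 1 then q.1 ⟨s, h⟩ else t), q.2)

/-- Partial trace over the first `m−1` `T`-tensor factors and the classical register of a
state on `T^{⊗m} ⊗ ℂ^r`. -/
noncomputable def ptraceAllButLast {T : Type} [Fintype T] [DecidableEq T] {m r : ℕ}
    (M : Matrix ((Fin m → T) × Fin r) ((Fin m → T) × Fin r) ℂ) :
    Matrix T T ℂ :=
  fun a b => ∑ c : Fin r, ∑ z : Fin (m - 1) → T,
    M ((fun s : Fin m => if h : (s : ℕ) < m - 1 then z ⟨s, h⟩ else a), c)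
      ((fun s : Fin m => if h : (s : ℕ) < m - 1 then z ⟨s, h⟩ else b), c)

/-!
Block `i` of `ν₂` is `ζ^{⊗(i−1)} ⊗ η_{1:m−i+1}`, and its `ζ` factors all sit before the last
`T`-factor. Tracing out that factor therefore only shortens `η_{1:m−i+1}` to `η_{1:m−i}`, which
is (a). Tracing out everything but the last factor removes `ζ^{⊗(i−1)}` (it has trace one) and
the first `m−i` factors of `η_{1:m−i+1}`, leaving the single-site marginal `η_{m−i+1}`; averaging
over `i` gives `ν'`, which is (b).

The bound on `Δ(ν', σ)` is convexity of the trace distance. For a Hermitian `A = P − N` with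
`P, N ≥ 0`, pairing with the sign `S` of `A` (so `−1 ≤ S ≤ 1` and `S A = |A|`) gives
`‖A‖₁ ≤ tr P + tr N`; applied to the Jordan decompositions this makes `‖·‖₁` subadditive on
Hermitian matrices, and it is absolutely homogeneous since `|c A| = |c| |A|`.
-/

section TraceNorm

open scoped MatrixOrder

variable {ι : Type} [Fintype ι] [DecidableEq ι]

theorem traceNorm_eq_re_trace_abs (M : Matrix ι ι ℂ) : traceNorm M = (CFC.abs M).trace.re := by
  have hMM := Matrix.posSemidef_conjTranspose_mul_self M
  rw [CFC.abs, Matrix.star_eq_conjTranspose,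
    CFC.sqrt_eq_real_sqrt _ (Matrix.nonneg_iff_posSemidef.mpr hMM), cfcₙ_eq_cfc, hMM.1.cfc_eq,
    Matrix.IsHermitian.cfc, Unitary.conjStarAlgAut_apply]
  rfl

theorem traceNorm_smul (c : ℂ) (M : Matrix ι ι ℂ) : traceNorm (c • M) = ‖c‖ * traceNorm M := by
  rw [traceNorm_eq_re_trace_abs, traceNorm_eq_re_trace_abs, CFC.abs_smul, Matrix.trace_smul,
    Complex.smul_re, smul_eq_mul]

theorem re_trace_mul_nonneg {P Q : Matrix ι ι ℂ} (hP : 0 ≤ P) (hQ : 0 ≤ Q) :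
    0 ≤ (P * Q).trace.re := by
  have h := (Matrix.nonneg_iff_posSemidef.mp
    (star_left_conjugate_nonneg hQ (CFC.sqrt P))).trace_nonneg
  rw [(CFC.sqrt_nonneg P).isSelfAdjoint.star_eq, Matrix.trace_mul_cycle,
    CFC.sqrt_mul_sqrt_self P hP] at h
  exact (Complex.nonneg_iff.mp h).1

theorem traceNorm_le_of_eq_sub {A P N : Matrix ι ι ℂ} (hA : A.IsHermitian)
    (hP : 0 ≤ P) (hN : 0 ≤ N) (h : A = P - N) :
    traceNorm A ≤ (P.trace + N.trace).re := by
  have hc (f : ℝ → ℝ) : ContinuousOn f (spectrum ℝ A) := A.finite_real_spectrum.continuousOn f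
  let sgn : ℝ → ℝ := fun x => if 0 ≤ x then 1 else -1
  have hS : cfc sgn A * A = CFC.abs A := by
    rw [CFC.abs_eq_cfc_norm A hA.isSelfAdjoint]
    conv_lhs => arg 2; rw [← cfc_id' ℝ A (ha := hA.isSelfAdjoint)]
    rw [← cfc_mul sgn (fun x : ℝ => x) A (hc _) (hc _)]
    refine cfc_congr fun x _ => ?_
    rcases le_or_gt 0 x with hx | hx
    · simp [sgn, hx, abs_of_nonneg]
    · simp [sgn, not_le.mpr hx, abs_of_neg hx]
  have hP' : 0 ≤ ((1 - cfc sgn A) * P).trace.re := by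
    refine re_trace_mul_nonneg ?_ hP
    rw [← cfc_const_one ℝ A (ha := hA.isSelfAdjoint), ← cfc_sub _ sgn A (hc _) (hc _)]
    exact cfc_nonneg fun x _ => by by_cases hx : 0 ≤ x <;> simp [sgn, hx]
  have hN' : 0 ≤ ((1 + cfc sgn A) * N).trace.re := by
    refine re_trace_mul_nonneg ?_ hN
    rw [← cfc_const_one ℝ A (ha := hA.isSelfAdjoint), ← cfc_add A _ sgn (hc _) (hc _)]
    exact cfc_nonneg fun x _ => by by_cases hx : 0 ≤ x <;> norm_num [sgn, hx]
  have hAPN : traceNorm A = (cfc sgn A * P).trace.re - (cfc sgn A * N).trace.re := by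
    rw [traceNorm_eq_re_trace_abs, ← hS]
    nth_rewrite 2 [h]
    rw [mul_sub, Matrix.trace_sub, Complex.sub_re]
  simp only [sub_mul, add_mul, one_mul, Matrix.trace_sub, Matrix.trace_add,
    Complex.sub_re, Complex.add_re] at hP' hN' ⊢
  linarith

theorem traceNorm_add_le {A B : Matrix ι ι ℂ} (hA : A.IsHermitian) (hB : B.IsHermitian) :
    traceNorm (A + B) ≤ traceNorm A + traceNorm B := by
  have hsplit : A + B = (A⁺ + B⁺) - (A⁻ + B⁻) := by
    nth_rewrite 1 [← CFC.posPart_sub_negPart A hA.isSelfAdjoint,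
      ← CFC.posPart_sub_negPart B hB.isSelfAdjoint]
    abel
  refine (traceNorm_le_of_eq_sub (hA.add hB) (add_nonneg (CFC.posPart_nonneg A)
    (CFC.posPart_nonneg B)) (add_nonneg (CFC.negPart_nonneg A) (CFC.negPart_nonneg B))
    hsplit).trans_eq ?_
  rw [traceNorm_eq_re_trace_abs, traceNorm_eq_re_trace_abs,
    ← CFC.posPart_add_negPart A hA.isSelfAdjoint, ← CFC.posPart_add_negPart B hB.isSelfAdjoint]
  simp only [Matrix.trace_add, Complex.add_re]
  ring

theorem traceNorm_sum_le {κ : Type} (s : Finset κ) (A : κ → Matrix ι ι ℂ)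
    (hA : ∀ i ∈ s, (A i).IsHermitian) :
    traceNorm (∑ i ∈ s, A i) ≤ ∑ i ∈ s, traceNorm (A i) :=
  Finset.le_sum_of_subadditive_on_pred traceNorm Matrix.IsHermitian
    (by simp [traceNorm_eq_re_trace_abs, CFC.abs_zero])
    (fun _ _ => traceNorm_add_le) (fun _ _ => Matrix.IsHermitian.add) A hA

theorem traceDist_sum_smul_le {κ : Type} [Fintype κ] (w : κ → ℝ) (hw : ∀ i, 0 ≤ w i)
    (hw1 : ∑ i, w i = 1) {ρ : κ → Matrix ι ι ℂ} (hρ : ∀ i, (ρ i).IsHermitian)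
    {σ : Matrix ι ι ℂ} (hσ : σ.IsHermitian) {ε : ℝ} (h : ∀ i, traceDist (ρ i) σ ≤ ε) :
    traceDist (∑ i, (w i : ℂ) • ρ i) σ ≤ ε := by
  have hsplit : ∑ i, (w i : ℂ) • ρ i - σ = ∑ i, (w i : ℂ) • (ρ i - σ) := by
    simp only [smul_sub, Finset.sum_sub_distrib, ← Finset.sum_smul, ← Complex.ofReal_sum, hw1,
      Complex.ofReal_one, one_smul]
  unfold traceDist at h ⊢
  rw [hsplit, div_le_iff₀ two_pos]
  calc traceNorm (∑ i, (w i : ℂ) • (ρ i - σ))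
      ≤ ∑ i, traceNorm ((w i : ℂ) • (ρ i - σ)) :=
        traceNorm_sum_le _ _ fun i _ => ((hρ i).sub hσ).smul (Complex.conj_ofReal _)
    _ ≤ ∑ i, w i * (ε * 2) := Finset.sum_le_sum fun i _ => by
        rw [traceNorm_smul, Complex.norm_real, Real.norm_of_nonneg (hw i)]
        exact mul_le_mul_of_nonneg_left ((div_le_iff₀ two_pos).mp (h i)) (hw i)
    _ = ε * 2 := by rw [← Finset.sum_mul, hw1, one_mul]

theorem traceDist_average_le {κ : Type} [Fintype κ] [Nonempty κ] {ρ : κ → Matrix ι ι ℂ}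
    (hρ : ∀ i, (ρ i).IsHermitian) {σ : Matrix ι ι ℂ} (hσ : σ.IsHermitian) {ε : ℝ}
    (h : ∀ i, traceDist (ρ i) σ ≤ ε) :
    traceDist ((1 / (Fintype.card κ : ℂ)) • ∑ i, ρ i) σ ≤ ε := by
  have hκ : (Fintype.card κ : ℝ) ≠ 0 := Nat.cast_ne_zero.mpr Fintype.card_ne_zero
  have := traceDist_sum_smul_le (fun _ => 1 / (Fintype.card κ : ℝ)) (fun _ => by positivity)
    (by simp [Finset.card_univ, hκ]) hρ hσ h
  simpa [Finset.smul_sum] using this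

end TraceNorm

theorem marginal_isHermitian {T : Type} [Fintype T] [DecidableEq T] {m : ℕ}
    {η : Matrix (Fin m → T) (Fin m → T) ℂ} (hη : η.IsHermitian) (i : Fin m) :
    (marginal η i).IsHermitian := by
  ext a b
  simp only [Matrix.conjTranspose_apply, marginal, star_sum, apply_ite star, star_zero, hη.apply]
  let f (x : Fin m → T) : Fin m → T := Function.update x i (Equiv.swap a b (x i))
  have hf : Function.Involutive f := fun x => by simp [f]
  refine Fintype.sum_equiv (hf.toPerm f) _ _ fun x => ?_
  by_cases hx : x i = b
  · have hxb : Function.update x i b = x := by rw [← hx, Function.update_eq_self]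
    simp [f, hx, hxb]
  · have : Equiv.swap a b (x i) ≠ a := by
      rw [Ne, Equiv.swap_apply_eq_iff, Equiv.swap_apply_left]; exact hx
    simp [f, hx, this]

section MargFirst

variable {T : Type} {m : ℕ}

theorem prefix_eq_snoc_iff {j : ℕ} (hj : j + 1 ≤ m) (x : Fin m → T) (a : Fin j → T) (t : T) :
    (fun u : Fin (j + 1) => x (Fin.castLE hj u)) = Fin.snoc a t ↔
      (fun u : Fin j => x (Fin.castLE (by omega) u)) = a ∧ x ⟨j, hj⟩ = t := by
  conv_lhs => rw [← Fin.snoc_init_self (fun u : Fin (j + 1) => x (Fin.castLE hj u))]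
  exact Fin.snoc_inj

theorem overwrite_snoc {j : ℕ} (hj : j + 1 ≤ m) (x : Fin m → T) (b : Fin j → T) (t : T) :
    (fun s : Fin m => if h : (s : ℕ) < j + 1 then Fin.snoc (α := fun _ => T) b t ⟨s, h⟩ else x s) =
      Function.update (fun s : Fin m => if h : (s : ℕ) < j then b ⟨s, h⟩ else x s) ⟨j, hj⟩ t := by
  funext s
  rcases lt_trichotomy (s : ℕ) j with hs | hs | hs
  · have hne : s ≠ ⟨j, hj⟩ := Fin.ne_of_val_ne hs.ne
    simp [hs, hne, Fin.snoc, Nat.lt_succ_of_lt hs]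
  · obtain rfl : s = ⟨j, hj⟩ := Fin.ext hs
    simp [Fin.snoc]
  · have hne : s ≠ ⟨j, hj⟩ := Fin.ne_of_val_ne hs.ne'
    simp [hne, hs.not_gt, show ¬ (s : ℕ) < j + 1 by omega]

theorem overwrite_prefix {j : ℕ} (hj : j ≤ m) (x : Fin m → T) :
    (fun s : Fin m => if h : (s : ℕ) < j then x (Fin.castLE hj ⟨s, h⟩) else x s) = x := by
  funext s
  split_ifs <;> rfl

theorem sum_margFirst_snoc_snoc [Fintype T] [DecidableEq T] (η : Matrix (Fin m → T) (Fin m → T) ℂ)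
    {j : ℕ} (hj : j + 1 ≤ m) (a b : Fin j → T) :
    ∑ t, margFirst η (j + 1) hj (Fin.snoc a t) (Fin.snoc b t) = margFirst η j (by omega) a b := by
  unfold margFirst
  rw [Finset.sum_comm]
  refine Finset.sum_congr rfl fun x _ => ?_
  have hO : Function.update (fun s : Fin m => if h : (s : ℕ) < j then b ⟨s, h⟩ else x s)
      ⟨j, hj⟩ (x ⟨j, hj⟩) = fun s : Fin m => if h : (s : ℕ) < j then b ⟨s, h⟩ else x s :=
    Function.update_eq_self_iff.mpr (by simp)
  calc _ = ∑ t, if x ⟨j, hj⟩ = t then (if (fun u : Fin j => x (Fin.castLE (by omega) u)) = a then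
        η x (Function.update (fun s : Fin m => if h : (s : ℕ) < j then b ⟨s, h⟩ else x s)
          ⟨j, hj⟩ t) else 0) else 0 := by
        refine Finset.sum_congr rfl fun t _ => ?_
        simp only [prefix_eq_snoc_iff]
        rw [overwrite_snoc hj]
        split_ifs <;> simp_all
    _ = _ := by rw [Finset.sum_ite_eq, if_pos (Finset.mem_univ _), hO]

theorem sum_margFirst_snoc [Fintype T] [DecidableEq T] (η : Matrix (Fin m → T) (Fin m → T) ℂ)
    {j : ℕ} (hj : j + 1 ≤ m) (α β : T) :
    ∑ w, margFirst η (j + 1) hj (Fin.snoc w α) (Fin.snoc w β) = marginal η ⟨j, hj⟩ α β := by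
  unfold margFirst marginal
  rw [Finset.sum_comm]
  refine Finset.sum_congr rfl fun x _ => ?_
  calc _ = ∑ w, if (fun u : Fin j => x (Fin.castLE (by omega) u)) = w then
        (if x ⟨j, hj⟩ = α then η x (Function.update
          (fun s : Fin m => if h : (s : ℕ) < j then w ⟨s, h⟩ else x s) ⟨j, hj⟩ β) else 0)
        else 0 := by
        refine Finset.sum_congr rfl fun w _ => ?_
        simp only [prefix_eq_snoc_iff]
        rw [overwrite_snoc hj]
        split_ifs <;> simp_all
    _ = _ := by rw [Finset.sum_ite_eq, if_pos (Finset.mem_univ _), overwrite_prefix]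

theorem margFirst_congr [Fintype T] [DecidableEq T] (η : Matrix (Fin m → T) (Fin m → T) ℂ)
    {j j' : ℕ} (e : j = j') (hj : j ≤ m) (hj' : j' ≤ m) {a b : Fin j → T} {a' b' : Fin j' → T}
    (ha : ∀ u, a u = a' (Fin.cast e u)) (hb : ∀ u, b u = b' (Fin.cast e u)) :
    margFirst η j hj a b = margFirst η j' hj' a' b' := by
  subst e
  obtain rfl : a = a' := funext ha
  obtain rfl : b = b' := funext hb
  rfl

theorem dite_shift_eq_snoc {k c : ℕ} (a : Fin k → T) (t : T) (u : Fin (k + 1 - c))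
    (e : k + 1 - c = k - c + 1) :
    (if h : c + (u : ℕ) < k then a ⟨c + u, h⟩ else t) =
      Fin.snoc (α := fun _ => T) (fun v : Fin (k - c) => a ⟨c + v, by omega⟩) t (Fin.cast e u) := by
  simp only [Fin.snoc, Fin.val_cast]
  split_ifs <;> first | rfl | omega

theorem margFirst_shift_eq_snoc [Fintype T] [DecidableEq T]
    {k c : ℕ} (η : Matrix (Fin (k + 1) → T) (Fin (k + 1) → T) ℂ) (hc : c ≤ k)
    (hj : k + 1 - c ≤ k + 1) (a b : Fin k → T) (α β : T) :
    margFirst η (k + 1 - c) hj (fun u => if h : c + (u : ℕ) < k then a ⟨c + u, h⟩ else α)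
        (fun u => if h : c + (u : ℕ) < k then b ⟨c + u, h⟩ else β) =
      margFirst η (k - c + 1) (by omega)
        (Fin.snoc (fun v : Fin (k - c) => a ⟨c + v, by omega⟩) α)
        (Fin.snoc (fun v : Fin (k - c) => b ⟨c + v, by omega⟩) β) :=
  margFirst_congr η (by omega) hj _ (fun u => dite_shift_eq_snoc a α u _)
    (fun u => dite_shift_eq_snoc b β u _)

theorem prod_ite_lt_castSucc {k c : ℕ} (hc : c ≤ k) (f : Fin (k + 1) → ℂ) :
    (∏ s : Fin (k + 1), if (s : ℕ) < c then f s else 1) =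
      ∏ s : Fin k, if (s : ℕ) < c then f s.castSucc else 1 := by
  rw [Fin.prod_univ_castSucc, if_neg (by simp; omega), mul_one]
  rfl

theorem prod_ite_lt_const {k c : ℕ} (hc : c ≤ k) (x : ℂ) :
    (∏ s : Fin k, if (s : ℕ) < c then x else 1) = x ^ c := by
  rw [Finset.prod_ite, Finset.prod_const, Finset.prod_const_one, mul_one, Fin.card_filter_val_lt,
    min_eq_right hc]

theorem sum_prod_diag_mul_comp_shift [Fintype T] [DecidableEq T] (ζ : Matrix T T ℂ) {k c : ℕ}
    (hc : c ≤ k) (G : (Fin (k - c) → T) → ℂ) :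
    ∑ z : Fin k → T, (∏ s : Fin k, if (s : ℕ) < c then ζ (z s) (z s) else 1) *
        G (fun v => z ⟨c + v, by omega⟩) = ζ.trace ^ c * ∑ w, G w := by
  let g (w : Fin (k - c) → T) (s : Fin k) (t : T) : ℂ :=
    if h : (s : ℕ) < c then ζ t t else if t = w ⟨s - c, by omega⟩ then 1 else 0
  have hg (z : Fin k → T) (w : Fin (k - c) → T) : ∏ s, g w s (z s) =
      if (fun v : Fin (k - c) => z ⟨c + v, by omega⟩) = w then
        ∏ s : Fin k, (if (s : ℕ) < c then ζ (z s) (z s) else 1) else 0 := by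
    split_ifs with hw
    · subst hw
      refine Finset.prod_congr rfl fun s _ => ?_
      by_cases hs : (s : ℕ) < c
      · simp [g, hs]
      · have hzs : z s = z ⟨c + (s - c), by omega⟩ := congrArg z (Fin.ext (by simp; omega))
        simp [g, hs, hzs]
    · obtain ⟨v, hv⟩ := Function.ne_iff.mp hw
      refine Finset.prod_eq_zero (i := ⟨c + v, by omega⟩) (Finset.mem_univ _) ?_
      simp [g, hv]
  have hgsum (w : Fin (k - c) → T) : ∑ z : Fin k → T, ∏ s, g w s (z s) = ζ.trace ^ c := by
    rw [← Fintype.prod_sum, ← prod_ite_lt_const hc]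
    refine Finset.prod_congr rfl fun s _ => ?_
    by_cases hs : (s : ℕ) < c
    · simp [g, hs, Matrix.trace]
    · simp [g, hs]
  calc _ = ∑ z : Fin k → T, ∑ w, (∏ s, g w s (z s)) * G w := by
        refine Finset.sum_congr rfl fun z _ => ?_
        simp only [hg, ite_mul, zero_mul, Finset.sum_ite_eq, Finset.mem_univ, if_true]
    _ = _ := by
        rw [Finset.sum_comm, Finset.mul_sum]
        simp only [← Finset.sum_mul, hgsum]

end MargFirst

theorem ptraceLastBlock_nu2 {T : Type} [Fintype T] [DecidableEq T] {k : ℕ} (ζ : Matrix T T ℂ)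
    (η : Matrix (Fin (k + 1) → T) (Fin (k + 1) → T) ℂ) :
    ptraceLastBlock (nu2 ζ η) = catalystState (k + 1) ζ η := by
  ext ⟨a, c⟩ ⟨b, c'⟩
  by_cases hc : c = c'
  · subst hc
    have hck : (c : ℕ) ≤ k := Nat.lt_succ_iff.mp c.2
    simp only [ptraceLastBlock, nu2, catalystState, if_true, Nat.add_sub_cancel]
    simp only [prod_ite_lt_castSucc hck, Fin.val_castSucc, Fin.is_lt, dif_pos,
      margFirst_shift_eq_snoc η hck, ← Finset.mul_sum, sum_margFirst_snoc_snoc]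
    -- the sizes `k - c` and `k + 1 - 1 - c` differ only up to definitional unfolding
    rfl
  · simp [ptraceLastBlock, nu2, catalystState, hc]

theorem ptraceAllButLast_nu2 {T : Type} [Fintype T] [DecidableEq T] {k : ℕ} (ζ : Matrix T T ℂ)
    (hζ : ζ.trace = 1) (η : Matrix (Fin (k + 1) → T) (Fin (k + 1) → T) ℂ) :
    ptraceAllButLast (nu2 ζ η) = (1 / ((k + 1 : ℕ) : ℂ)) • ∑ i, marginal η i := by
  ext α β
  have hblock (c : Fin (k + 1)) : ∑ z : Fin k → T,
      nu2 ζ η ((fun s : Fin (k + 1) => if h : (s : ℕ) < k then z ⟨s, h⟩ else α), c)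
        ((fun s : Fin (k + 1) => if h : (s : ℕ) < k then z ⟨s, h⟩ else β), c) =
      1 / ((k + 1 : ℕ) : ℂ) * marginal η c.rev α β := by
    have hck : (c : ℕ) ≤ k := Nat.lt_succ_iff.mp c.2
    simp only [nu2, if_true, prod_ite_lt_castSucc hck, Fin.val_castSucc, Fin.is_lt, dif_pos,
      margFirst_shift_eq_snoc η hck, mul_assoc, ← Finset.mul_sum]
    rw [sum_prod_diag_mul_comp_shift ζ hck (fun w => margFirst η (k - c + 1) (by omega)
      (Fin.snoc w α) (Fin.snoc w β)), hζ, one_pow, one_mul, sum_margFirst_snoc,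
      show c.rev = ⟨k - c, by omega⟩ from Fin.ext (by simp only [Fin.val_rev]; omega)]
  simp only [ptraceAllButLast, Matrix.smul_apply, Matrix.sum_apply, smul_eq_mul]
  calc _ = ∑ c : Fin (k + 1), 1 / ((k + 1 : ℕ) : ℂ) * marginal η c.rev α β :=
        Finset.sum_congr rfl fun c _ => hblock c
    _ = _ := by
        rw [← Finset.mul_sum]
        congr 1
        exact Fintype.sum_equiv Fin.revPerm _ _ fun c => rfl

/-- (a) The partial trace of `ν₂` over the `m`-th `T`-factor is the
catalyst `ω`; (b) the partial trace of `ν₂` over the first `m−1` `T`-factors and the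
classical register is `ν' = (1/m) ∑_{i=1}^m η_i`; consequently, if every marginal `η_i` is
`ε`-close to a state `σ`, so is `ν'`. -/
theorem nu2_marginals {T : Type} [Fintype T] [DecidableEq T] {m : ℕ} (hm : 1 ≤ m)
    (ζ : Matrix T T ℂ) (hζ : IsState ζ)
    (η : Matrix (Fin m → T) (Fin m → T) ℂ) (hη : IsState η) :
    ptraceLastBlock (nu2 ζ η) = catalystState m ζ η ∧
    ptraceAllButLast (nu2 ζ η) = (1 / (m : ℂ)) • ∑ i : Fin m, marginal η i ∧
    ∀ (σ : Matrix T T ℂ), IsState σ → ∀ ε : ℝ,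
      (∀ i : Fin m, traceDist (marginal η i) σ ≤ ε) →
      traceDist ((1 / (m : ℂ)) • ∑ i : Fin m, marginal η i) σ ≤ ε := by
  obtain ⟨k, rfl⟩ : ∃ k, m = k + 1 := ⟨m - 1, by omega⟩
  refine ⟨ptraceLastBlock_nu2 ζ η, ptraceAllButLast_nu2 ζ hζ.2 η, fun σ hσ ε hε => ?_⟩
  simpa using traceDist_average_le (marginal_isHermitian hη.1.isHermitian) hσ.1.isHermitian hε

end PaperQI
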